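/- Let Assumptions D1b and D2 hold for the density f₀ and level f_{τ,0}. Then for δ > 0 small enough there exists a constant c₂ > 0 such that for any sequence δₙ (with 0 < δₙ ≤ δ), setting εₙ = c₂ δₙ, one has |f₀(x) − f_{τ,0}| ≥ εₙ for every x ∈ ( L_{δₙ}(f_{τ,0})^c \ L_δ(f_{τ,0})^c ) ∪ ( L_{−δₙ}(f_{τ,0}) \ L_{−δ}(f_{τ,0}) ). -/

import Mathlib

open MeasureTheory Filter Topology Asymptotics
open scoped ENNReal NNReal symmDiff

noncomputable section

namespace LSBS

attribute [local instance] Classical.propDecidable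

/-- The standard normal density `φ`. -/
def gpdf (t : ℝ) : ℝ := (Real.sqrt (2 * Real.pi))⁻¹ * Real.exp (-(t ^ 2) / 2)

/-- The standard normal distribution function `Φ`. -/
def gcdf (t : ℝ) : ℝ := ∫ u in Set.Iic t, gpdf u

variable {d : ℕ}

/-- Euclidean space `ℝ^d`. -/
abbrev Evec (d : ℕ) := EuclideanSpace ℝ (Fin d)

/-- `μ_{f₀}(A) = ∫_A f₀(x) dx`. -/
def muF (f₀ : Evec d → ℝ) (A : Set (Evec d)) : ℝ := ∫ x in A, f₀ x

/-- The positive semidefinite square root of a matrix (junk value `0` if not psd). -/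
def matSqrt (H : Matrix (Fin d) (Fin d) ℝ) : Matrix (Fin d) (Fin d) ℝ :=
  if h : H.PosSemidef then
    (h.1.eigenvectorUnitary : Matrix (Fin d) (Fin d) ℝ) *
      Matrix.diagonal ((↑) ∘ (fun i => Real.sqrt (h.1.eigenvalues i))) *
      (star h.1.eigenvectorUnitary : Matrix (Fin d) (Fin d) ℝ)
  else 0

/-- `H^{-1/2}`, the inverse of the psd square root. -/
def invSqrt (H : Matrix (Fin d) (Fin d) ℝ) : Matrix (Fin d) (Fin d) ℝ := (matSqrt H)⁻¹

/-- Apply a matrix to a Euclidean vector. -/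
def mApply (M : Matrix (Fin d) (Fin d) ℝ) (v : Evec d) : Evec d := Matrix.toEuclideanLin M v

/-- Entrywise sup-norm of a matrix. -/
def matNorm (M : Matrix (Fin d) (Fin d) ℝ) : ℝ := ⨆ i, ⨆ j, |M i j|

/-- The kernel density estimator
`f̂_{n,H}(x) = n⁻¹ ∑_{i<n} K(H^{-1/2}(x - Xᵢ)) |H|^{-1/2}`. -/
def kde (K : Evec d → ℝ) (H : Matrix (Fin d) (Fin d) ℝ) (X : ℕ → Evec d) (n : ℕ)
    (x : Evec d) : ℝ :=
  (n : ℝ)⁻¹ * ∑ i ∈ Finset.range n, K (mApply (invSqrt H) (x - X i)) * H.det ^ (-(1 : ℝ) / 2)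

/-- `R(K) = ∫ K² dλ`. -/
def RK (K : Evec d → ℝ) : ℝ := ∫ x, (K x) ^ 2

/-- The Hessian matrix of `f` at `x`, via the second iterated Fréchet derivative. -/
def hessian (f : Evec d → ℝ) (x : Evec d) : Matrix (Fin d) (Fin d) ℝ :=
  Matrix.of fun i j =>
    iteratedFDeriv ℝ 2 f x ![EuclideanSpace.single i (1 : ℝ), EuclideanSpace.single j (1 : ℝ)]

/-- `D₁(x,H) = ½ μ₂(K) tr(H ∇²f₀(x))`. -/
def D1 (μ₂ : ℝ) (f₀ : Evec d → ℝ) (H : Matrix (Fin d) (Fin d) ℝ) (x : Evec d) : ℝ :=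
  (1 / 2) * μ₂ * (H * hessian f₀ x).trace

/-- Eigenvalues of a symmetric matrix (junk value `0` if not Hermitian). -/
def eigs (H : Matrix (Fin d) (Fin d) ℝ) : Fin d → ℝ :=
  if h : H.IsHermitian then h.eigenvalues else 0

/-- Largest eigenvalue. -/
def lamMax (H : Matrix (Fin d) (Fin d) ℝ) : ℝ := ⨆ i, eigs H i

/-- Smallest eigenvalue. -/
def lamMin (H : Matrix (Fin d) (Fin d) ℝ) : ℝ := ⨅ i, eigs H i

/-- `f_τ(f) = inf { y > 0 : ∫ f 1{f ≥ y} dλ ≤ 1 - τ }`. -/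
def tauLevel (τ : ℝ) (f : Evec d → ℝ) : ℝ :=
  sInf {y : ℝ | 0 < y ∧ (∫ x in {z | y ≤ f z}, f x) ≤ 1 - τ}

/-- Variant of `tauLevel` with `y ≥ 0`. -/
def tauLevel0 (τ : ℝ) (f : Evec d → ℝ) : ℝ :=
  sInf {y : ℝ | 0 ≤ y ∧ (∫ x in {z | y ≤ f z}, f x) ≤ 1 - τ}

/-- The super-level set `{x : f(x) ≥ c}`. -/
def supLevel (f : Evec d → ℝ) (c : ℝ) : Set (Evec d) := {x | c ≤ f x}

/-- The level set (contour) `{x : f(x) = c}`. -/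
def levelSet (f : Evec d → ℝ) (c : ℝ) : Set (Evec d) := {x | f x = c}

/-- `S^δ = ∪_{x ∈ S} B(x,δ)`. -/
def tube (S : Set (Evec d)) (δ : ℝ) : Set (Evec d) := ⋃ x ∈ S, Metric.closedBall x δ

/-- `f` is a probability density on `ℝ^d`. -/
structure IsDensity (f : Evec d → ℝ) : Prop where
  nonneg : ∀ x, 0 ≤ f x
  integrable : MeasureTheory.Integrable f
  total : (∫ x, f x) = 1

/-- VC-type uniform covering number bound for a class of functions, with envelope. -/
def VCClass (𝓕 : Set (Evec d → ℝ)) : Prop :=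
  ∃ F : Evec d → ℝ, (∀ f ∈ 𝓕, ∀ x, |f x| ≤ F x) ∧
    ∃ A v : ℝ, 0 < A ∧ 0 < v ∧
      ∀ P : Measure (Evec d), IsProbabilityMeasure P → ∀ τ : ℝ, 0 < τ →
        ∃ G : Finset (Evec d → ℝ), (G.card : ℝ) ≤ (A / τ) ^ v ∧
          ∀ f ∈ 𝓕, ∃ g ∈ G, (∫ x, (f x - g x) ^ 2 ∂P) ≤ τ ^ 2 * ∫ x, (F x) ^ 2 ∂P

/-- The class `{ K(H^{-1/2}(t - ·)) : t ∈ ℝ^d, H ∈ 𝒮 }`. -/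
def kerClass (K : Evec d → ℝ) : Set (Evec d → ℝ) :=
  {f | ∃ (t : Evec d) (H : Matrix (Fin d) (Fin d) ℝ), H.PosDef ∧
    f = fun y => K (mApply (invSqrt H) (t - y))}

/-- The class `{ ‖∇K(H^{-1/2}(t - ·))‖ : t ∈ ℝ^d, H ∈ 𝒮 }`. -/
def gradKerClass (K : Evec d → ℝ) : Set (Evec d → ℝ) :=
  {f | ∃ (t : Evec d) (H : Matrix (Fin d) (Fin d) ℝ), H.PosDef ∧
    f = fun y => ‖gradient K (mApply (invSqrt H) (t - y))‖}

/-- Assumption K of the paper. -/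
structure AssumptionK (K : Evec d → ℝ) (μ₂ : ℝ) : Prop where
  contDiff : ContDiff ℝ 1 K
  density : IsDensity K
  bounded : ∃ M, ∀ x, K x ≤ M
  gradBounded : ∃ M, ∀ x, ‖gradient K x‖ ≤ M
  sqIntegrable : MeasureTheory.Integrable fun x => (K x) ^ 2
  gradProdIntegrable : ∀ i j : Fin d,
    MeasureTheory.Integrable fun x => gradient K x i * gradient K x j
  meanZero : ∀ i : Fin d, (∫ x, x i * K x) = 0
  secondMoment : ∀ i j : Fin d, (∫ x, x i * x j * K x) = if i = j then μ₂ else 0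
  vcKer : VCClass (kerClass K)
  vcGradKer : VCClass (gradKerClass K)

/-- Assumption K2 of the paper: coordinatewise symmetry of `K` and square-integrable
first and second partial derivatives. -/
structure AssumptionK2 (K : Evec d → ℝ) : Prop where
  symm : ∀ (x : Evec d) (i : Fin d),
    K (x - (2 * x i) • EuclideanSpace.single i (1 : ℝ)) = K x
  firstSq : ∀ i : Fin d, MeasureTheory.Integrable fun x => (gradient K x i) ^ 2
  secondSq : ∀ i j : Fin d, MeasureTheory.Integrable fun x => (hessian K x i j) ^ 2

/-- Assumption H of the paper, for the sequence of bandwidth matrices. -/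
structure AssumptionH (Hseq : ℕ → Matrix (Fin d) (Fin d) ℝ) : Prop where
  symm : ∀ n, (Hseq n).IsSymm
  posDef : ∀ n, (Hseq n).PosDef
  detAnti : Antitone fun n => (Hseq n).det
  detTendsto : Tendsto (fun n => (Hseq n).det) atTop (𝓝 0)
  ratio : Tendsto (fun n : ℕ => (n : ℝ) * (Hseq n).det ^ ((1 : ℝ) / 2) /
      Real.log ((Hseq n).det ^ (-(1 : ℝ) / 2))) atTop atTop
  loglog : Tendsto (fun n : ℕ => Real.log (Real.log (n : ℝ)) /
      Real.log ((Hseq n).det ^ (-(1 : ℝ) / 2))) atTop (𝓝 0)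
  doubling : ∃ c : ℝ, 0 < c ∧ ∀ n,
      (Hseq n).det ^ ((1 : ℝ) / 2) ≤ c * (Hseq (2 * n)).det ^ ((1 : ℝ) / 2)
  eigenComparable : (fun n => lamMax (Hseq n)) =O[atTop] fun n => lamMin (Hseq n)
  ratioMin : Tendsto (fun n : ℕ => (n : ℝ) * (Hseq n).det ^ ((1 : ℝ) / 2) * lamMin (Hseq n) /
      Real.log ((Hseq n).det ^ (-(1 : ℝ) / 2))) atTop atTop
  lamMaxBound : (fun n => lamMax (Hseq n)) =O[atTop]
      fun n : ℕ => (n : ℝ) ^ (-(2 : ℝ) / (4 + (d : ℝ)))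

/-- Assumption H2 of the paper, for the pilot bandwidth sequences `H₀, H₁, H₂`. -/
structure AssumptionH2 (H0 H1 H2m : ℕ → Matrix (Fin d) (Fin d) ℝ) : Prop where
  symm : ∀ n, (H0 n).IsSymm ∧ (H1 n).IsSymm ∧ (H2m n).IsSymm
  posDef : ∀ n, (H0 n).PosDef ∧ (H1 n).PosDef ∧ (H2m n).PosDef
  tendstoZero : ∀ i j, Tendsto (fun n => H0 n i j) atTop (𝓝 0) ∧
      Tendsto (fun n => H1 n i j) atTop (𝓝 0) ∧ Tendsto (fun n => H2m n i j) atTop (𝓝 0)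
  r0 : Tendsto (fun n : ℕ => (n : ℝ)⁻¹ * (H0 n).det ^ (-(1 : ℝ) / 2)) atTop (𝓝 0)
  r1 : ∀ i j, Tendsto (fun n : ℕ => (n : ℝ)⁻¹ * (H1 n).det ^ (-(1 : ℝ) / 2) * (H1 n)⁻¹ i j)
      atTop (𝓝 0)
  r2 : ∀ i j k l, Tendsto (fun n : ℕ => (n : ℝ)⁻¹ * (H2m n).det ^ (-(1 : ℝ) / 2) *
      ((H2m n)⁻¹ i j * (H2m n)⁻¹ k l)) atTop (𝓝 0)

/-- Assumption D1a of the paper (for the level-set problem at level `c`). -/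
structure AssumptionD1a (f₀ : Evec d → ℝ) (c : ℝ) : Prop where
  bounded : BddAbove (Set.range f₀)
  smooth : ∃ a : ℝ, 0 < a ∧ ∃ V : Set (Evec d), IsOpen V ∧
    {x | c - a ≤ f₀ x ∧ f₀ x ≤ c + a} ⊆ V ∧ ContDiffOn ℝ 2 f₀ V ∧
    (∃ M : ℝ, ∀ x ∈ V, ‖gradient f₀ x‖ ≤ M ∧ ∀ i j, |hessian f₀ x i j| ≤ M) ∧
    (∃ b : ℝ, 0 < b ∧ ∀ x, c - a ≤ f₀ x → f₀ x ≤ c + a → b ≤ ‖gradient f₀ x‖) ∧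
    (∃ δ : ℝ, 0 < δ ∧ {x | c - a ≤ f₀ x ∧ f₀ x ≤ c + a} ⊆ tube (levelSet f₀ c) δ)

/-- Assumption D1b of the paper (for the HDR problem at level `f_{τ,0}`). -/
structure AssumptionD1b (f₀ : Evec d → ℝ) (ftau : ℝ) : Prop where
  bounded : BddAbove (Set.range f₀)
  smooth : ContDiff ℝ 2 f₀
  derivBounded : ∃ M : ℝ, ∀ x, ‖gradient f₀ x‖ ≤ M ∧ ∀ i j, |hessian f₀ x i j| ≤ M
  levelNbhd : ∃ a : ℝ, 0 < a ∧
    (∃ b : ℝ, 0 < b ∧ ∀ x, ftau - a ≤ f₀ x → f₀ x ≤ ftau + a → b ≤ ‖gradient f₀ x‖) ∧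
    (∃ δ : ℝ, 0 < δ ∧ {x | ftau - a ≤ f₀ x ∧ f₀ x ≤ ftau + a} ⊆ tube (levelSet f₀ ftau) δ)

/-- Assumption D3 of the paper: four continuous, bounded, square-integrable derivatives. -/
structure AssumptionD3 (f₀ : Evec d → ℝ) : Prop where
  smooth : ContDiff ℝ 4 f₀
  bounded : ∀ k : ℕ, k ≤ 4 → ∃ M, ∀ x, ‖iteratedFDeriv ℝ k f₀ x‖ ≤ M
  sqIntegrable : ∀ k : ℕ, k ≤ 4 →
    MeasureTheory.Integrable fun x => ‖iteratedFDeriv ℝ k f₀ x‖ ^ 2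

/-- `A_x = -‖∇f₀(x)‖ / √(R(K) c)`. -/
def Acoef (K : Evec d → ℝ) (f₀ : Evec d → ℝ) (c : ℝ) (x : Evec d) : ℝ :=
  -(‖gradient f₀ x‖ / Real.sqrt (RK K * c))

/-- `B_x(H) = -√(n |H|^{1/2}) D₁(x,H) / √(R(K) c)`. -/
def Bcoef (K : Evec d → ℝ) (μ₂ : ℝ) (f₀ : Evec d → ℝ) (c : ℝ) (n : ℕ)
    (H : Matrix (Fin d) (Fin d) ℝ) (x : Evec d) : ℝ :=
  -(Real.sqrt ((n : ℝ) * H.det ^ ((1 : ℝ) / 2)) * D1 μ₂ f₀ H x / Real.sqrt (RK K * c))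

/-- The asymptotic approximation `LS(H)` of the level-set risk. -/
def LSrisk (K : Evec d → ℝ) (μ₂ : ℝ) (f₀ : Evec d → ℝ) (c : ℝ) (n : ℕ)
    (H : Matrix (Fin d) (Fin d) ℝ) : ℝ :=
  c / Real.sqrt ((n : ℝ) * H.det ^ ((1 : ℝ) / 2)) *
    ∫ x in levelSet f₀ c,
      (2 * gpdf (Bcoef K μ₂ f₀ c n H x) +
        2 * gcdf (Bcoef K μ₂ f₀ c n H x) * Bcoef K μ₂ f₀ c n H x -
        Bcoef K μ₂ f₀ c n H x) / -(Acoef K f₀ c x) ∂μH[(d : ℝ) - 1]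

/-- `w₀ = (∫_{β_τ} ‖∇f₀‖⁻¹ dℋ)⁻¹`. -/
def w0 (f₀ : Evec d → ℝ) (ftau : ℝ) : ℝ :=
  (∫ x in levelSet f₀ ftau, ‖gradient f₀ x‖⁻¹ ∂μH[(d : ℝ) - 1])⁻¹

/-- `V₁(H) = ∫_{β_τ} D₁(x,H)/‖∇f₀(x)‖ dℋ(x)`. -/
def V1 (μ₂ : ℝ) (f₀ : Evec d → ℝ) (ftau : ℝ) (H : Matrix (Fin d) (Fin d) ℝ) : ℝ :=
  ∫ x in levelSet f₀ ftau, D1 μ₂ f₀ H x / ‖gradient f₀ x‖ ∂μH[(d : ℝ) - 1]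

/-- `V₂(H) = f_{τ,0}⁻¹ ∫_{L_τ} D₁(x,H) dx`. -/
def V2 (μ₂ : ℝ) (f₀ : Evec d → ℝ) (ftau : ℝ) (H : Matrix (Fin d) (Fin d) ℝ) : ℝ :=
  ftau⁻¹ * ∫ x in supLevel f₀ ftau, D1 μ₂ f₀ H x

/-- `D₂(H) = w₀ (V₁(H) + V₂(H))`. -/
def D2c (μ₂ : ℝ) (f₀ : Evec d → ℝ) (ftau : ℝ) (H : Matrix (Fin d) (Fin d) ℝ) : ℝ :=
  w0 f₀ ftau * (V1 μ₂ f₀ ftau H + V2 μ₂ f₀ ftau H)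

/-- `C_x(H) = B_x(H) + √(n|H|^{1/2}/(R(K) f_{τ,0})) D₂(H)`. -/
def Ccoef (K : Evec d → ℝ) (μ₂ : ℝ) (f₀ : Evec d → ℝ) (ftau : ℝ) (n : ℕ)
    (H : Matrix (Fin d) (Fin d) ℝ) (x : Evec d) : ℝ :=
  Bcoef K μ₂ f₀ ftau n H x +
    Real.sqrt ((n : ℝ) * H.det ^ ((1 : ℝ) / 2) / (RK K * ftau)) * D2c μ₂ f₀ ftau H

/-- The asymptotic approximation `HDR(H)` of the HDR risk. -/
def HDRrisk (K : Evec d → ℝ) (μ₂ : ℝ) (f₀ : Evec d → ℝ) (ftau : ℝ) (n : ℕ)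
    (H : Matrix (Fin d) (Fin d) ℝ) : ℝ :=
  ftau / Real.sqrt ((n : ℝ) * H.det ^ ((1 : ℝ) / 2)) *
    ∫ x in levelSet f₀ ftau,
      (2 * gpdf (Ccoef K μ₂ f₀ ftau n H x) +
        2 * gcdf (Ccoef K μ₂ f₀ ftau n H x) * Ccoef K μ₂ f₀ ftau n H x -
        Ccoef K μ₂ f₀ ftau n H x) / -(Acoef K f₀ ftau x) ∂μH[(d : ℝ) - 1]

/-- `F_x = -½ μ₂(K) tr(∇²f(x)) / √(R(K) c)`, with a generic curvature function `fhess`. -/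
def FxLS (K : Evec d → ℝ) (μ₂ c : ℝ) (fhess : Evec d → ℝ) (x : Evec d) : ℝ :=
  -((1 / 2) * μ₂ * (hessian fhess x).trace / Real.sqrt (RK K * c))

/-- `A_x = -‖∇f(x)‖/√(R(K) c)`, with a generic gradient function `fgrad`. -/
def AxLS (K : Evec d → ℝ) (c : ℝ) (fgrad : Evec d → ℝ) (x : Evec d) : ℝ :=
  -(‖gradient fgrad x‖ / Real.sqrt (RK K * c))

/-- The (possibly plug-in) approximation `LS(h)` for bandwidths `h² I`:
`LS(h) = (c/(n h^d)^{1/2}) ∫_β [φ(B) + 2Φ(B)B − B]/(−A) dℋ` with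
`B_x(h) = (n h^{d+4})^{1/2} F_x`. -/
def LSgen (K : Evec d → ℝ) (μ₂ c : ℝ) (fgrad fhess : Evec d → ℝ) (β : Set (Evec d))
    (n : ℕ) (h : ℝ) : ℝ :=
  c / Real.sqrt ((n : ℝ) * h ^ d) *
    ∫ x in β,
      (gpdf (Real.sqrt ((n : ℝ) * h ^ (d + 4)) * FxLS K μ₂ c fhess x) +
        2 * gcdf (Real.sqrt ((n : ℝ) * h ^ (d + 4)) * FxLS K μ₂ c fhess x) *
          (Real.sqrt ((n : ℝ) * h ^ (d + 4)) * FxLS K μ₂ c fhess x) -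
        Real.sqrt ((n : ℝ) * h ^ (d + 4)) * FxLS K μ₂ c fhess x) /
        -(AxLS K c fgrad x) ∂μH[(d : ℝ) - 1]

/-- `AR_LS(s) = s^{−d/(d+4)} ∫_{β(c)} [φ(sF_x) + 2Φ(sF_x)sF_x − sF_x]/(−A_x) dℋ(x)`. -/
def ARLS (K : Evec d → ℝ) (μ₂ c : ℝ) (f₀ : Evec d → ℝ) (s : ℝ) : ℝ :=
  s ^ (-(d : ℝ) / ((d : ℝ) + 4)) *
    ∫ x in levelSet f₀ c,
      (gpdf (s * FxLS K μ₂ c f₀ x) + 2 * gcdf (s * FxLS K μ₂ c f₀ x) * (s * FxLS K μ₂ c f₀ x) -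
        s * FxLS K μ₂ c f₀ x) / -(AxLS K c f₀ x) ∂μH[(d : ℝ) - 1]

/-- `A_x = -‖∇f(x)‖/√(R(K) f_{τ,0})` (HDR version with generic gradient function). -/
def AxGen (K : Evec d → ℝ) (ftau : ℝ) (fgrad : Evec d → ℝ) (x : Evec d) : ℝ :=
  -(‖gradient fgrad x‖ / Real.sqrt (RK K * ftau))

/-- The quantity `G_x` of the HDR bandwidth-selection problem, with generic plug-ins. -/
def GxHDR (K : Evec d → ℝ) (μ₂ ftau : ℝ) (fgrad fhess : Evec d → ℝ)
    (β L : Set (Evec d)) (x : Evec d) : ℝ :=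
  -(μ₂ * (hessian fhess x).trace / Real.sqrt (RK K * ftau)) +
    ((∫ y in β, ‖gradient fgrad y‖⁻¹ ∂μH[(d : ℝ) - 1])⁻¹ *
        (∫ y in β, μ₂ * (hessian fhess y).trace / (2 * ‖gradient fgrad y‖)
          ∂μH[(d : ℝ) - 1]) +
      (∫ y in β, ‖gradient fgrad y‖⁻¹ ∂μH[(d : ℝ) - 1])⁻¹ / ftau *
        ∫ y in L, μ₂ * (hessian fhess y).trace / 2) / Real.sqrt (RK K * ftau)

/-- The (possibly plug-in) approximation `HDR(h)` for bandwidths `h² I`. -/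
def HDRgen (K : Evec d → ℝ) (μ₂ ftau : ℝ) (fgrad fhess : Evec d → ℝ)
    (β L : Set (Evec d)) (n : ℕ) (h : ℝ) : ℝ :=
  ftau / Real.sqrt ((n : ℝ) * h ^ d) *
    ∫ x in β,
      (gpdf (Real.sqrt ((n : ℝ) * h ^ (d + 4)) * GxHDR K μ₂ ftau fgrad fhess β L x) +
        2 * gcdf (Real.sqrt ((n : ℝ) * h ^ (d + 4)) * GxHDR K μ₂ ftau fgrad fhess β L x) *
          (Real.sqrt ((n : ℝ) * h ^ (d + 4)) * GxHDR K μ₂ ftau fgrad fhess β L x) -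
        Real.sqrt ((n : ℝ) * h ^ (d + 4)) * GxHDR K μ₂ ftau fgrad fhess β L x) /
        -(AxGen K ftau fgrad x) ∂μH[(d : ℝ) - 1]

/-- `AR_HDR(s) = s^{−d/(d+4)} ∫_{β_τ} [φ(sG_x) + 2Φ(sG_x)sG_x − sG_x]/(−A_x) dℋ(x)`. -/
def ARHDR (K : Evec d → ℝ) (μ₂ : ℝ) (f₀ : Evec d → ℝ) (ftau : ℝ) (s : ℝ) : ℝ :=
  s ^ (-(d : ℝ) / ((d : ℝ) + 4)) *
    ∫ x in levelSet f₀ ftau,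
      (gpdf (s * GxHDR K μ₂ ftau f₀ f₀ (levelSet f₀ ftau) (supLevel f₀ ftau) x) +
        2 * gcdf (s * GxHDR K μ₂ ftau f₀ f₀ (levelSet f₀ ftau) (supLevel f₀ ftau) x) *
          (s * GxHDR K μ₂ ftau f₀ f₀ (levelSet f₀ ftau) (supLevel f₀ ftau) x) -
        s * GxHDR K μ₂ ftau f₀ f₀ (levelSet f₀ ftau) (supLevel f₀ ftau) x) /
        -(AxGen K ftau f₀ x) ∂μH[(d : ℝ) - 1]

/-- `Yₙ = O_p(aₙ)`: boundedness in probability at rate `aₙ`. -/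
def IsBigOp {Ω : Type*} [MeasurableSpace Ω] (P : Measure Ω) (Y : ℕ → Ω → ℝ)
    (a : ℕ → ℝ) : Prop :=
  ∀ ε : ℝ, 0 < ε → ∃ C : ℝ, 0 < C ∧
    ∀ᶠ n in atTop, P {ω | C * |a n| < |Y n ω|} ≤ ENNReal.ofReal ε

/-! Near the contour (`c = f_{τ,0}`) `‖∇f₀‖ ≥ b` and the Hessian is bounded, so from a point
`x` with `f₀ x` close to `c` one straight step of length `2 |f₀ x - c| / b` along `∓∇f₀ x`
already crosses the level `c`. By the intermediate value theorem `x` lies within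
`(2 / b) |f₀ x - c|` of `β_τ ⊆ L_τ`, so a point outside the `δₙ`-tube around either set has
`|f₀ x - c| ≥ (b / 2) δₙ` once `δₙ` is small. -/

open scoped RealInnerProductSpace

theorem opNorm_le_sum_norm_apply_single {ι F : Type*} [Fintype ι] [DecidableEq ι]
    [NormedAddCommGroup F] [NormedSpace ℝ F] (T : EuclideanSpace ℝ ι →L[ℝ] F) :
    ‖T‖ ≤ ∑ i, ‖T (EuclideanSpace.single i 1)‖ := by
  refine T.opNorm_le_bound (by positivity) fun x => ?_
  calc ‖T x‖ = ‖∑ i, x i • T (EuclideanSpace.single i 1)‖ := by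
        conv_lhs => rw [← (EuclideanSpace.basisFun ι ℝ).sum_repr x]
        simp [map_sum]
    _ ≤ ∑ i, ‖x‖ * ‖T (EuclideanSpace.single i 1)‖ := by
        refine (norm_sum_le _ _).trans (Finset.sum_le_sum fun i _ => ?_)
        rw [norm_smul]
        gcongr
        exact PiLp.norm_apply_le x i
    _ = (∑ i, ‖T (EuclideanSpace.single i 1)‖) * ‖x‖ := by rw [← Finset.mul_sum, mul_comm]

theorem norm_fderiv_fderiv_le_of_abs_hessian_le {f : Evec d → ℝ} {x : Evec d} {M : ℝ}
    (hM : ∀ i j, |hessian f x i j| ≤ M) :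
    ‖fderiv ℝ (fderiv ℝ f) x‖ ≤ d ^ 2 * M := by
  calc ‖fderiv ℝ (fderiv ℝ f) x‖ ≤ ∑ i : Fin d, ∑ j : Fin d, |hessian f x i j| := by
        refine (opNorm_le_sum_norm_apply_single _).trans (Finset.sum_le_sum fun i _ => ?_)
        refine (opNorm_le_sum_norm_apply_single _).trans_eq ?_
        simp [hessian, iteratedFDeriv_two_apply]
    _ ≤ ∑ _i : Fin d, ∑ _j : Fin d, M := by gcongr with i _ j; exact hM i j
    _ = d ^ 2 * M := by simp; ring

theorem abs_sub_sub_fderiv_le {E : Type*} [NormedAddCommGroup E] [NormedSpace ℝ E]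
    {f : E → ℝ} {K : ℝ} (hf : ContDiff ℝ 2 f) (hK : ∀ y, ‖fderiv ℝ (fderiv ℝ f) y‖ ≤ K)
    (x v : E) : |f (x + v) - f x - fderiv ℝ f x v| ≤ K * ‖v‖ ^ 2 := by
  have hf' : Differentiable ℝ (fderiv ℝ f) :=
    (hf.fderiv_right (m := 1) le_rfl).differentiable one_ne_zero
  have hK0 : 0 ≤ K := (norm_nonneg (fderiv ℝ (fderiv ℝ f) x)).trans (hK x)
  have hderiv : ∀ y ∈ Metric.closedBall x ‖v‖, ‖fderiv ℝ f y - fderiv ℝ f x‖ ≤ K * ‖v‖ :=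
    fun y hy => (convex_univ.norm_image_sub_le_of_norm_fderiv_le (fun z _ => hf' z)
      (fun z _ => hK z) trivial trivial).trans (by gcongr; exact mem_closedBall_iff_norm.mp hy)
  simpa [sq, mul_assoc] using (convex_closedBall x ‖v‖).norm_image_sub_le_of_norm_fderiv_le'
    (fun y _ => hf.differentiable two_ne_zero y) hderiv
    (Metric.mem_closedBall_self (norm_nonneg v)) (show x + v ∈ Metric.closedBall x ‖v‖ by simp)

section Descent

variable {E : Type*} [NormedAddCommGroup E] [InnerProductSpace ℝ E] {f : E → ℝ} {x g : E}
  {c b L : ℝ}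

theorem exists_eq_dist_le_of_lt (hf : Continuous f) (hb : 0 < b) (hg : b ≤ ‖g‖)
    (htaylor : ∀ v, |f (x + v) - f x - ⟪g, v⟫| ≤ L * ‖v‖ ^ 2) (hcx : c < f x)
    (hsmall : 4 * L * (f x - c) ≤ b ^ 2) :
    ∃ z, f z = c ∧ dist x z ≤ 2 / b * (f x - c) := by
  set ε := f x - c
  set t := 2 / b * ε with ht
  have hε0 : 0 < ε := sub_pos.mpr hcx
  have ht0 : 0 < t := by positivity
  have hg0 : 0 < ‖g‖ := hb.trans_le hg
  set u : E := -((t / ‖g‖) • g) with hu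
  have hnorm : ‖u‖ = t := by
    rw [hu, norm_neg, norm_smul, Real.norm_of_nonneg (by positivity)]
    field_simp
  have hinner : ⟪g, u⟫ = -(t * ‖g‖) := by
    rw [hu, inner_neg_right, real_inner_smul_right, real_inner_self_eq_norm_sq]
    field_simp
  have hquad : L * t ^ 2 ≤ ε := by
    calc L * t ^ 2 = 4 * L * ε * ε / b ^ 2 := by rw [ht]; field_simp; ring
      _ ≤ b ^ 2 * ε / b ^ 2 := by gcongr
      _ = ε := by field_simp
  have hstep : f (x + u) ≤ c := by
    have hupper := (abs_le.mp (htaylor u)).2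
    rw [hinner, hnorm] at hupper
    have hdecrease : 2 * ε ≤ t * ‖g‖ := by
      calc 2 * ε = t * b := by rw [ht]; field_simp
        _ ≤ t * ‖g‖ := by gcongr
    linarith
  have hcont : ContinuousOn (fun s : ℝ => f (x + s • u)) (Set.Icc 0 1) := by fun_prop
  obtain ⟨s, hs, hfs⟩ := intermediate_value_Icc' zero_le_one hcont
    (show c ∈ Set.Icc (f (x + (1 : ℝ) • u)) (f (x + (0 : ℝ) • u)) by
      simp only [one_smul, zero_smul, add_zero]
      exact ⟨hstep, hcx.le⟩)
  refine ⟨x + s • u, hfs, ?_⟩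
  rw [dist_self_add_right, norm_smul, hnorm, Real.norm_of_nonneg hs.1]
  exact mul_le_of_le_one_left ht0.le hs.2

theorem exists_eq_dist_le (hf : Continuous f) (hb : 0 < b) (hg : b ≤ ‖g‖)
    (htaylor : ∀ v, |f (x + v) - f x - ⟪g, v⟫| ≤ L * ‖v‖ ^ 2)
    (hsmall : 4 * L * |f x - c| ≤ b ^ 2) :
    ∃ z, f z = c ∧ dist x z ≤ 2 / b * |f x - c| := by
  rcases lt_trichotomy (f x) c with hlt | heq | hgt
  · rw [abs_of_neg (sub_neg.mpr hlt)] at hsmall ⊢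
    have htaylor' : ∀ v, |-f (x + v) - -f x - ⟪-g, v⟫| ≤ L * ‖v‖ ^ 2 := fun v => by
      rw [inner_neg_left, ← abs_neg]
      convert htaylor v using 2
      ring
    obtain ⟨z, hz, hdist⟩ := exists_eq_dist_le_of_lt (f := fun y => -f y) (c := -c) hf.neg hb
      (by rwa [norm_neg]) htaylor' (neg_lt_neg hlt) (by linarith)
    exact ⟨z, neg_inj.mp hz, by linarith⟩
  · exact ⟨x, heq, by simp [heq]⟩
  · rw [abs_of_pos (sub_pos.mpr hgt)] at hsmall ⊢
    exact exists_eq_dist_le_of_lt hf hb hg htaylor hgt hsmall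

end Descent

theorem AssumptionD1b.exists_dist_levelSet_le {f₀ : Evec d → ℝ} {c : ℝ}
    (h : AssumptionD1b f₀ c) :
    ∃ C > 0, ∃ ε > 0, ∀ x, |f₀ x - c| ≤ ε → ∃ z ∈ levelSet f₀ c, dist x z ≤ C * |f₀ x - c| := by
  obtain ⟨a, ha, ⟨b, hb, hgrad⟩, -⟩ := h.levelNbhd
  obtain ⟨M, hM⟩ := h.derivBounded
  set L : ℝ := d ^ 2 * M
  have hL : ∀ y, ‖fderiv ℝ (fderiv ℝ f₀) y‖ ≤ L := fun y =>
    norm_fderiv_fderiv_le_of_abs_hessian_le (hM y).2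
  have hL0 : 0 ≤ L := (norm_nonneg (fderiv ℝ (fderiv ℝ f₀) 0)).trans (hL 0)
  refine ⟨2 / b, by positivity, min a (b ^ 2 / (4 * (L + 1))), by positivity, fun x hx => ?_⟩
  have hband := abs_le.mp (hx.trans (min_le_left _ _))
  have hsmall : 4 * L * |f₀ x - c| ≤ b ^ 2 :=
    calc 4 * L * |f₀ x - c| ≤ 4 * (L + 1) * (b ^ 2 / (4 * (L + 1))) := by
          gcongr
          · linarith
          · exact hx.trans (min_le_right _ _)
      _ = b ^ 2 := by field_simp
  exact exists_eq_dist_le h.smooth.continuous hb (hgrad x (by linarith) (by linarith))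
    (fun v => by rw [inner_gradient_left]; exact abs_sub_sub_fderiv_le h.smooth hL x v) hsmall

theorem mul_le_abs_sub_of_notMem_tube {f : Evec d → ℝ} {c C ε r : ℝ} {S : Set (Evec d)}
    {x : Evec d} (hnear : ∀ y, |f y - c| ≤ ε → ∃ z ∈ levelSet f c, dist y z ≤ C * |f y - c|)
    (hC : 0 < C) (hε : 0 < ε) (hS : levelSet f c ⊆ S) (hr : 0 ≤ r) (hr1 : r ≤ 1)
    (hx : x ∉ tube S r) :
    min C⁻¹ ε * r ≤ |f x - c| := by
  by_contra! hlt
  obtain ⟨z, hz, hdist⟩ := hnear x <|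
    calc |f x - c| ≤ min C⁻¹ ε * r := hlt.le
      _ ≤ ε * 1 := by gcongr; exact min_le_right _ _
      _ = ε := mul_one ε
  refine hx (Set.mem_biUnion (hS hz) (Metric.mem_closedBall.mpr ?_))
  calc dist x z ≤ C * |f x - c| := hdist
    _ ≤ C * (C⁻¹ * r) := by
        gcongr
        exact hlt.le.trans (by gcongr; exact min_le_left _ _)
    _ = r := by field_simp

theorem level_separation_general
    {d : ℕ}
    (f₀ : Evec d → ℝ)
    (τ : ℝ)
    (hD1b : AssumptionD1b f₀ (tauLevel τ f₀)) :
    ∃ δ : ℝ, 0 < δ ∧ ∃ c₂ : ℝ, 0 < c₂ ∧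
      ∀ δn : ℝ, 0 < δn → δn ≤ δ →
        ∀ x ∈ ((tube (supLevel f₀ (tauLevel τ f₀)) δn)ᶜ \
              (tube (supLevel f₀ (tauLevel τ f₀)) δ)ᶜ) ∪
            ((supLevel f₀ (tauLevel τ f₀) \ tube (levelSet f₀ (tauLevel τ f₀)) δn) \
              (supLevel f₀ (tauLevel τ f₀) \ tube (levelSet f₀ (tauLevel τ f₀)) δ)),
          c₂ * δn ≤ |f₀ x - tauLevel τ f₀| := by
  obtain ⟨C, hC, ε, hε, hnear⟩ := hD1b.exists_dist_levelSet_le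
  refine ⟨1, one_pos, min C⁻¹ ε, by positivity, fun δn hδn hδn1 x hx => ?_⟩
  rcases hx with ⟨hx, -⟩ | ⟨⟨-, hx⟩, -⟩
  · exact mul_le_abs_sub_of_notMem_tube hnear hC hε (fun z hz => hz.symm.le) hδn.le hδn1 hx
  · exact mul_le_abs_sub_of_notMem_tube hnear hC hε subset_rfl hδn.le hδn1 hx

/-- **Lemma B.3 (level separation near the contour).**
Under Assumptions D1b and D2, for `δ > 0` small enough there is `c₂ > 0` such that
taking `εₙ = c₂ δₙ` (for any `0 < δₙ ≤ δ`) one has `|f₀(x) − f_{τ,0}| ≥ εₙ` on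
`(L_{δₙ}ᶜ \ L_δᶜ) ∪ (L_{−δₙ} \ L_{−δ})`. -/
theorem level_separation
    {d : ℕ} (hd : 2 ≤ d)
    (f₀ : Evec d → ℝ) (hf₀ : IsDensity f₀)
    (τ : ℝ) (hτ : τ ∈ Set.Ioo (0 : ℝ) 1)
    (hD1b : AssumptionD1b f₀ (tauLevel τ f₀))
    (hD2 : IsCompact (levelSet f₀ (tauLevel τ f₀))) :
    ∃ δ : ℝ, 0 < δ ∧ ∃ c₂ : ℝ, 0 < c₂ ∧
      ∀ δn : ℝ, 0 < δn → δn ≤ δ →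
        ∀ x ∈ ((tube (supLevel f₀ (tauLevel τ f₀)) δn)ᶜ \
              (tube (supLevel f₀ (tauLevel τ f₀)) δ)ᶜ) ∪
            ((supLevel f₀ (tauLevel τ f₀) \ tube (levelSet f₀ (tauLevel τ f₀)) δn) \
              (supLevel f₀ (tauLevel τ f₀) \ tube (levelSet f₀ (tauLevel τ f₀)) δ)),
          c₂ * δn ≤ |f₀ x - tauLevel τ f₀| :=
  level_separation_general f₀ τ hD1b

end LSBS
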